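/- arXiv:1804.05043 — 3 statements merged into one kernel-verified Lean document; each statement's English description precedes it below -/
import Mathlib

section
/- Let A be a finite commutative local ring of length two. Then the residue field of A is a finite field F_q for some prime power q, and A is isomorphic to either F_q[t]/(t²) or W₂(F_q). -/
/-!
Length two means that the maximal ideal `m` of `A` is an atom, i.e. a simple `A`-module. Hence
`m ^ 2 = 0` by Nakayama, `m ≅ k` so that `|A| = q ^ 2`, and `m` is generated by any of its nonzero
elements. So `A → k` is a square-zero extension.

If `p = 0` in `A`, then `k` is formally étale over `𝔽_p`, so `A → k` has a ring section, which
together with a generator of `m` gives `k[X]/(X²) ≅ A`. Otherwise `m = (p)`. Then `A` and `W₂(k)`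
are both square-zero extensions of `k` of order `q ^ 2` with kernel generated by `p` (for `W₂(k)`
because `k` is perfect, so that `V x = p · F⁻¹ x`). Each of them is identified with `(ℤ/p²)[X]/(g)`,
where `g` is a monic lift of the minimal polynomial of a primitive element of `k / 𝔽_p`, by
lifting a simple root of `g` (one Newton step suffices).
-/

open Polynomial

structure RingHom.IsSquareZeroExtension {R K : Type*} [CommRing R] [Field K] (π : R →+* K) :
    Prop where
  surjective : Function.Surjective π
  ker_sq : RingHom.ker π ^ 2 = ⊥

namespace RingHom.IsSquareZeroExtension

variable {R K : Type*} [CommRing R] [Field K] {π : R →+* K}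

theorem mul_eq_zero (hπ : π.IsSquareZeroExtension) {x y : R} (hx : π x = 0) (hy : π y = 0) :
    x * y = 0 := by
  have h := Ideal.mul_mem_mul (RingHom.mem_ker.mpr hx) (RingHom.mem_ker.mpr hy)
  rwa [← sq, hπ.ker_sq, Ideal.mem_bot] at h

theorem isUnit_of_map_ne_zero (hπ : π.IsSquareZeroExtension) {x : R} (hx : π x ≠ 0) :
    IsUnit x := by
  obtain ⟨y, hy⟩ := hπ.surjective (π x)⁻¹
  have hε : π (x * y - 1) = 0 := by simp [hy, hx]
  -- `x * y = 1 + ε` with `ε ^ 2 = 0`, so `1 - ε` inverts `x * y`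
  refine .of_mul_eq_one (y * (2 - x * y)) ?_
  linear_combination -hπ.mul_eq_zero hε hε

theorem exists_eval₂_eq_zero (hπ : π.IsSquareZeroExtension) {S : Type*} [CommRing S]
    (ψ : S →+* R) (g : S[X]) {ζ : K} (hζ : g.eval₂ (π.comp ψ) ζ = 0)
    (hζ' : (derivative g).eval₂ (π.comp ψ) ζ ≠ 0) :
    ∃ r, g.eval₂ ψ r = 0 ∧ π r = ζ := by
  obtain ⟨r₀, rfl⟩ := hπ.surjective ζ
  set f := g.map ψ
  have hc : π (f.eval r₀) = 0 := by rwa [eval_map, hom_eval₂]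
  have hd : IsUnit (f.derivative.eval r₀) :=
    hπ.isUnit_of_map_ne_zero (by rwa [derivative_map, eval_map, hom_eval₂])
  -- the Newton step `r₀ - f(r₀) / f'(r₀)` is already exact, since `f(r₀) ^ 2 = 0`
  refine ⟨r₀ - f.eval r₀ * hd.unit⁻¹, ?_, by simp [hc]⟩
  obtain ⟨c, hc'⟩ := f.binomExpansion r₀ (-(f.eval r₀ * hd.unit⁻¹))
  rw [← eval_map, sub_eq_add_neg, hc']
  have hinv : f.derivative.eval r₀ * hd.unit⁻¹ = 1 := hd.mul_val_inv
  linear_combination (-f.eval r₀) * hinv + c * (hd.unit⁻¹ : Rˣ) ^ 2 * hπ.mul_eq_zero hc hc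

theorem surjective_of_surjective_comp (hπ : π.IsSquareZeroExtension) {B : Type*} [CommRing B]
    (Φ : B →+* R) (hΦ : Function.Surjective (π.comp Φ)) {t : B}
    (hker : RingHom.ker π = Ideal.span {Φ t}) : Function.Surjective Φ := by
  have ht : π (Φ t) = 0 := by
    rw [← RingHom.mem_ker, hker]
    exact Ideal.mem_span_singleton_self _
  have hdiv {x : R} (hx : π x = 0) : ∃ y, x = Φ t * y := by
    rw [← RingHom.mem_ker, hker, Ideal.mem_span_singleton'] at hx
    obtain ⟨y, rfl⟩ := hx
    exact ⟨y, mul_comm _ _⟩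
  intro a
  obtain ⟨b₀, hb₀⟩ := hΦ (π a)
  obtain ⟨y, hy⟩ := hdiv (x := a - Φ b₀) (by simp_all)
  obtain ⟨b₁, hb₁⟩ := hΦ (π y)
  have hty : Φ t * (y - Φ b₁) = 0 := hπ.mul_eq_zero ht (by simp_all)
  exact ⟨b₀ + t * b₁, by simp only [map_add, map_mul]; linear_combination -hy - hty⟩

end RingHom.IsSquareZeroExtension

theorem PowerBasis.natCard_eq {S T : Type*} [CommRing S] [Ring T] [Algebra S T] [Finite S]
    (pb : PowerBasis S T) : Nat.card T = Nat.card S ^ pb.dim := by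
  rw [Nat.card_congr pb.basis.equivFun.toEquiv, Nat.card_fun, Nat.card_fin]

theorem AdjoinRoot.natCard_of_monic {S : Type*} [CommRing S] [Finite S] {g : S[X]}
    (hg : g.Monic) : Nat.card (AdjoinRoot g) = Nat.card S ^ g.natDegree := by
  rw [(powerBasis' hg).natCard_eq, powerBasis'_dim]

theorem AdjoinRoot.finite_of_monic {S : Type*} [CommRing S] [Finite S] {g : S[X]}
    (hg : g.Monic) : Finite (AdjoinRoot g) :=
  have := (powerBasis' hg).finite
  Module.finite_of_finite S

namespace RingHom.IsSquareZeroExtension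

variable {R K : Type*} [CommRing R] [Field K] [_root_.Finite K] {π : R →+* K}

/-- `K` is formally étale over its prime field, so `RingHom.id K` lifts along `π`. -/
theorem exists_section (hπ : π.IsSquareZeroExtension) (hp : (ringChar K : R) = 0) :
    ∃ σ : K →+* R, ∀ c, π (σ c) = c := by
  set p := ringChar K
  have : Fact p.Prime := ⟨CharP.char_is_prime K p⟩
  let : Algebra (ZMod p) K := ZMod.algebra K p
  let : Algebra (ZMod p) R := (ZMod.castHom (ringChar.dvd hp) R).toAlgebra
  let πₐ : R →ₐ[ZMod p] K :=
    { π with commutes' := RingHom.congr_fun (Subsingleton.elim (π.comp (algebraMap _ R)) _) }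
  exact ⟨Algebra.FormallySmooth.liftOfSurjective (AlgHom.id (ZMod p) K) πₐ hπ.surjective
    ⟨2, hπ.ker_sq⟩, Algebra.FormallySmooth.liftOfSurjective_apply (AlgHom.id (ZMod p) K) πₐ _ _⟩

theorem nonempty_ringEquiv_quotient_X_sq (hπ : π.IsSquareZeroExtension)
    (hp : (ringChar K : R) = 0) {t : R} (hker : RingHom.ker π = Ideal.span {t})
    (hcard : Nat.card R = Nat.card K ^ 2) :
    Nonempty (R ≃+* K[X] ⧸ Ideal.span {(X ^ 2 : K[X])}) := by
  obtain ⟨σ, hσ⟩ := hπ.exists_section hp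
  have ht : π t = 0 := by
    rw [← RingHom.mem_ker, hker]
    exact Ideal.mem_span_singleton_self t
  let Φ : AdjoinRoot (X ^ 2 : K[X]) →+* R :=
    AdjoinRoot.lift σ t (by simp [sq, hπ.mul_eq_zero ht ht])
  have hΦ : Function.Surjective Φ :=
    hπ.surjective_of_surjective_comp Φ (fun c => ⟨AdjoinRoot.of _ c, by simp [Φ, hσ]⟩)
      (t := AdjoinRoot.root _) (by simpa [Φ] using hker)
  have := AdjoinRoot.finite_of_monic (monic_X_pow (R := K) 2)
  have hbij := hΦ.bijective_of_nat_card_le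
    (by rw [AdjoinRoot.natCard_of_monic (monic_X_pow 2), natDegree_X_pow, hcard])
  exact ⟨(RingEquiv.ofBijective Φ hbij).symm⟩

theorem nonempty_adjoinRoot_ringEquiv (hπ : π.IsSquareZeroExtension) {p : ℕ} [Fact p.Prime]
    [Algebra (ZMod p) K] (pb : PowerBasis (ZMod p) K) {g : (ZMod (p ^ 2))[X]} (hg : g.Monic)
    (hgf : g.map (ZMod.castHom (dvd_pow_self p two_ne_zero) (ZMod p)) = minpoly (ZMod p) pb.gen)
    (hker : RingHom.ker π = Ideal.span {(p : R)}) (hcard : Nat.card R = Nat.card K ^ 2) :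
    Nonempty (AdjoinRoot g ≃+* R) := by
  set φ := ZMod.castHom (dvd_pow_self p two_ne_zero) (ZMod p)
  have hp : π p = 0 := by
    rw [← RingHom.mem_ker, hker]
    exact Ideal.mem_span_singleton_self _
  have hp2 : ((p ^ 2 : ℕ) : R) = 0 := by
    push_cast
    rw [sq]
    exact hπ.mul_eq_zero hp hp
  let ψ : ZMod (p ^ 2) →+* R := ZMod.castHom (ringChar.dvd hp2) R
  have heval (q : (ZMod (p ^ 2))[X]) (x : K) : q.eval₂ (π.comp ψ) x = aeval x (q.map φ) := by
    rw [aeval_def, eval₂_map]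
    congr 1
    exact Subsingleton.elim _ _
  obtain ⟨r, hr, hπr⟩ := hπ.exists_eval₂_eq_zero ψ g (ζ := pb.gen)
    (by rw [heval, hgf, minpoly.aeval])
    (by
      rw [heval, ← derivative_map, hgf]
      exact (Algebra.IsSeparable.isSeparable _ _).aeval_derivative_ne_zero (minpoly.aeval _ _))
  let Φ : AdjoinRoot g →+* R := AdjoinRoot.lift ψ r hr
  have hΦ : Function.Surjective (π.comp Φ) := by
    intro x
    obtain ⟨q, rfl⟩ := pb.exists_eq_aeval' x
    obtain ⟨q, rfl⟩ := map_surjective φ (ZMod.ringHom_surjective φ) q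
    exact ⟨AdjoinRoot.mk g q, by simp [Φ, hom_eval₂, heval, hπr]⟩
  have hsurj := hπ.surjective_of_surjective_comp Φ hΦ (t := (p : AdjoinRoot g))
    (by simpa using hker)
  have := AdjoinRoot.finite_of_monic hg
  refine ⟨.ofBijective Φ (hsurj.bijective_of_nat_card_le (le_of_eq ?_))⟩
  rw [AdjoinRoot.natCard_of_monic hg, hcard, pb.natCard_eq, ← pb.natDegree_minpoly, ← hgf,
    hg.natDegree_map, Nat.card_zmod, Nat.card_zmod, ← pow_mul, ← pow_mul, mul_comm]

end RingHom.IsSquareZeroExtension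

theorem WittVector.exists_eq_p_mul_of_coeff_zero_eq_zero {p : ℕ} [Fact p.Prime] {k : Type*}
    [CommRing k] [CharP k p] [PerfectRing k p] {x : WittVector p k} (hx : x.coeff 0 = 0) :
    ∃ y, x = p * y := by
  obtain ⟨y, hy⟩ := (frobenius_bijective p k).surjective (x.shift 1)
  refine ⟨y, ?_⟩
  rw [mul_comm, ← verschiebung_frobenius, hy]
  exact eq_iterate_verschiebung (n := 1) (by simpa using hx)

theorem TruncatedWittVector.natCard {p n : ℕ} {k : Type*} :
    Nat.card (TruncatedWittVector p n k) = Nat.card k ^ n :=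
  (Nat.card_fun (α := Fin n)).trans (by rw [Nat.card_fin])

namespace TruncatedWittVector

variable (p : ℕ) [Fact p.Prime] {k : Type*} [CommRing k]

noncomputable def residue (n : ℕ) : TruncatedWittVector p (n + 1) k →+* k :=
  (WittVector.truncate (n + 1)).liftOfSurjective (WittVector.truncate_surjective p _ k)
    ⟨WittVector.constantCoeff, fun x hx => by
      simpa using (WittVector.mem_ker_truncate _ x).mp hx 0 n.succ_pos⟩

variable {p}

theorem residue_truncate (n : ℕ) (x : WittVector p k) :
    residue p n (WittVector.truncate (n + 1) x) = x.coeff 0 :=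
  RingHom.liftOfSurjective_comp_apply _ _ _ x

theorem residue_surjective (n : ℕ) : Function.Surjective (residue p n : _ →+* k) := fun c =>
  ⟨WittVector.truncate (n + 1) (WittVector.teichmuller p c), by
    rw [residue_truncate, WittVector.teichmuller_coeff_zero]⟩

theorem natCast_pow_eq_zero [CharP k p] (n : ℕ) : (p : TruncatedWittVector p n k) ^ n = 0 := by
  rw [← map_natCast (WittVector.truncate n), ← map_pow, ← RingHom.mem_ker,
    WittVector.mem_ker_truncate]
  exact fun i hi => WittVector.coeff_p_pow_eq_zero p k hi.ne

theorem ker_residue [CharP k p] [PerfectRing k p] (n : ℕ) :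
    RingHom.ker (residue p n : _ →+* k) = Ideal.span {(p : TruncatedWittVector p (n + 1) k)} := by
  refine le_antisymm (fun x hx => ?_) ?_
  · obtain ⟨x, rfl⟩ := WittVector.truncate_surjective p _ k x
    rw [RingHom.mem_ker, residue_truncate] at hx
    obtain ⟨y, rfl⟩ := WittVector.exists_eq_p_mul_of_coeff_zero_eq_zero hx
    rw [map_mul, map_natCast]
    exact Ideal.mul_mem_right _ _ (Ideal.mem_span_singleton_self _)
  · rw [Ideal.span_le, Set.singleton_subset_iff, SetLike.mem_coe, RingHom.mem_ker,
      ← map_natCast (WittVector.truncate (n + 1)), residue_truncate, WittVector.coeff_p_zero]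

theorem isSquareZeroExtension_residue {K : Type*} [Field K] [CharP K p] [PerfectRing K p] :
    (residue p 1 : TruncatedWittVector p 2 K →+* K).IsSquareZeroExtension :=
  ⟨residue_surjective 1, by
    rw [ker_residue, Ideal.span_singleton_pow, natCast_pow_eq_zero, Ideal.span_singleton_zero]⟩

end TruncatedWittVector

theorem RingHom.IsSquareZeroExtension.nonempty_ringEquiv_truncatedWittVector {R K : Type*}
    [CommRing R] [Field K] [_root_.Finite K] {π : R →+* K} (hπ : π.IsSquareZeroExtension)
    {p : ℕ} [Fact p.Prime] [CharP K p] (hker : RingHom.ker π = Ideal.span {(p : R)})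
    (hcard : Nat.card R = Nat.card K ^ 2) :
    Nonempty (R ≃+* TruncatedWittVector p 2 K) := by
  let : Algebra (ZMod p) K := ZMod.algebra K p
  let pb := Field.powerBasisOfFiniteOfSeparable (ZMod p) K
  set φ := ZMod.castHom (dvd_pow_self p two_ne_zero) (ZMod p)
  obtain ⟨g, hgf, -, hg⟩ := lifts_and_degree_eq_and_monic
    (map_surjective φ (ZMod.ringHom_surjective φ) (minpoly (ZMod p) pb.gen))
    (minpoly.monic pb.isIntegral_gen)
  obtain ⟨e₁⟩ := hπ.nonempty_adjoinRoot_ringEquiv pb hg hgf hker hcard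
  obtain ⟨e₂⟩ := TruncatedWittVector.isSquareZeroExtension_residue.nonempty_adjoinRoot_ringEquiv
    pb hg hgf (TruncatedWittVector.ker_residue 1) TruncatedWittVector.natCard
  exact ⟨e₁.symm.trans e₂⟩

namespace IsLocalRing

variable {A : Type*} [CommRing A] [IsLocalRing A]

theorem isAtom_maximalIdeal_of_compositionSeries (s : CompositionSeries (Submodule A A))
    (h0 : s.head = ⊥) (h2 : s.last = ⊤) (hs : s.length = 2) : IsAtom (maximalIdeal A) := by
  have hcov₀ : ⊥ ⋖ s ⟨1, by omega⟩ := h0 ▸ s.step ⟨0, by omega⟩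
  have hcov₁ : s ⟨1, by omega⟩ ⋖ ⊤ := by
    have hlast : s ⟨2, by omega⟩ = ⊤ := h2 ▸ congrArg s (Fin.ext hs.symm)
    exact hlast ▸ s.step ⟨1, by omega⟩
  have hmax : Ideal.IsMaximal (s ⟨1, by omega⟩) :=
    Ideal.isMaximal_def.mpr (covBy_top_iff.mp hcov₁)
  rw [← eq_maximalIdeal hmax]
  exact bot_covBy_iff.mp hcov₀

theorem span_singleton_eq_maximalIdeal (h : IsAtom (maximalIdeal A)) {a : A}
    (ha : a ∈ maximalIdeal A) (ha0 : a ≠ 0) : Ideal.span {a} = maximalIdeal A :=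
  (h.le_iff_eq (by simpa using ha0)).mp ((Ideal.span_singleton_le_iff_mem _).mpr ha)

theorem maximalIdeal_sq_eq_bot [IsNoetherianRing A] (h : IsAtom (maximalIdeal A)) :
    maximalIdeal A ^ 2 = ⊥ := by
  by_contra hne
  have heq : maximalIdeal A ^ 2 = maximalIdeal A :=
    (h.le_iff_eq hne).mp (Ideal.pow_le_self two_ne_zero)
  refine h.1 (Submodule.eq_bot_of_le_smul_of_le_jacobson_bot _ _ (IsNoetherian.noetherian _) ?_
    (maximalIdeal_le_jacobson ⊥))
  rw [smul_eq_mul, ← sq, heq]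

theorem isSquareZeroExtension_residue [IsNoetherianRing A] (h : IsAtom (maximalIdeal A)) :
    (residue A).IsSquareZeroExtension :=
  ⟨residue_surjective, by rw [ker_residue, maximalIdeal_sq_eq_bot h]⟩

theorem natCard_eq_natCard_residueField_sq [Finite A] (h : IsAtom (maximalIdeal A)) :
    Nat.card A = Nat.card (ResidueField A) ^ 2 := by
  obtain ⟨I, hI, ⟨e⟩⟩ := isSimpleModule_iff_quot_maximal.mp (isSimpleModule_iff_isAtom.mpr h)
  rw [eq_maximalIdeal hI] at e
  rw [Submodule.card_eq_card_quotient_mul_card (maximalIdeal A), Nat.card_congr e.toEquiv, sq]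
  rfl

end IsLocalRing

open IsLocalRing

/-- Let `A` be a finite commutative local ring of length two.  Then the residue field of
`A` is a finite field `𝔽_q` for some prime power `q`, and `A` is isomorphic to either
`𝔽_q[t]/(t²)` or `W₂(𝔽_q)`. -/
theorem stmt_2 (A : Type*) [CommRing A] [IsLocalRing A] [Finite A]
    (hlen : ∃ s : CompositionSeries (Submodule A A),
      s.head = ⊥ ∧ s.last = ⊤ ∧ s.length = 2) :
    (∃ p n : ℕ, p.Prime ∧ 0 < n ∧ Nat.card (IsLocalRing.ResidueField A) = p ^ n) ∧
      (Nonempty (A ≃+* (Polynomial (IsLocalRing.ResidueField A) ⧸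
          Ideal.span {(Polynomial.X : Polynomial (IsLocalRing.ResidueField A)) ^ 2})) ∨
        ∃ (p : ℕ) (_ : Fact p.Prime),
          Nonempty (A ≃+* TruncatedWittVector p 2 (IsLocalRing.ResidueField A))) := by
  obtain ⟨s, h0, h2, hs⟩ := hlen
  have hm := isAtom_maximalIdeal_of_compositionSeries s h0 h2 hs
  have hπ := isSquareZeroExtension_residue hm
  have hcard := natCard_eq_natCard_residueField_sq hm
  have : Finite (ResidueField A) := .of_surjective _ residue_surjective
  set p := ringChar (ResidueField A)
  have : Fact p.Prime := ⟨CharP.char_is_prime (ResidueField A) p⟩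
  refine ⟨?_, ?_⟩
  · have := Fintype.ofFinite (ResidueField A)
    obtain ⟨n, hp, hn⟩ := FiniteField.card (ResidueField A) p
    exact ⟨p, n, hp, n.pos, by rw [Nat.card_eq_fintype_card, hn]⟩
  rcases eq_or_ne (p : A) 0 with hpA | hpA
  · obtain ⟨t, ht, ht0⟩ := Submodule.exists_mem_ne_zero_of_ne_bot hm.1
    exact .inl (hπ.nonempty_ringEquiv_quotient_X_sq hpA
      (by rw [ker_residue, span_singleton_eq_maximalIdeal hm ht ht0]) hcard)
  · have hpm : (p : A) ∈ maximalIdeal A := by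
      rw [← ker_residue, RingHom.mem_ker, map_natCast, CharP.cast_eq_zero (ResidueField A) p]
    exact .inr ⟨p, ‹_›, hπ.nonempty_ringEquiv_truncatedWittVector
      (by rw [ker_residue, span_singleton_eq_maximalIdeal hm hpm hpA]) hcard⟩
end

section
/- Let M be a finite group, N a normal p-subgroup of M, and P a Sylow p-subgroup of M. Suppose χ is a one-dimensional complex character of N that is stabilised by M (i.e. χ(mnm⁻¹) = χ(n) for all m ∈ M, n ∈ N) and that χ extends to a one-dimensional character of P. Then χ extends to a one-dimensional character of M. -/
/-!
Let `χP` extend `χ` to `P` and let `V : M → ℂˣ` be the transfer of `χP`. For `n ∈ N`, each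
factor of `V n` is `χP` evaluated at an `M`-conjugate of a power `n ^ k`, which lies in `N`,
so by `M`-invariance it equals `χ n ^ k`; the exponents add up to `[M : P]`, hence
`V n = χ n ^ [M : P]`. As `[M : P]` is prime to `p`, hence to `|N|`, a power of `V` extends `χ`.
-/

open Subgroup

namespace MonoidHom

variable {G A : Type*} [Group G] [CommGroup A]

theorem transfer_apply_eq_pow_index {H : Subgroup G} [H.FiniteIndex] (ϕ : H →* A) (h : H)
    (hϕ : ∀ (k : ℕ) (g : G) (hk : g⁻¹ * (h : G) ^ k * g ∈ H), ϕ ⟨_, hk⟩ = ϕ h ^ k) :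
    transfer ϕ h = ϕ h ^ H.index := by
  have : Fintype (Quotient (MulAction.orbitRel (zpowers (h : G)) (G ⧸ H))) :=
    Fintype.ofFinite _
  rw [index_eq_sum_minimalPeriod H (h : G), ← Finset.prod_pow_eq_pow_sum,
    transfer_eq_prod_quotient_orbitRel_zpowers_quot]
  exact Finset.prod_congr rfl fun _ _ => hϕ _ _ _

theorem transfer_apply_eq_pow_index_of_extends {H N : Subgroup G} [H.FiniteIndex]
    [hN : N.Normal] (hNH : N ≤ H) (χ : N →* A)
    (hχ : ∀ (g : G) (n : N), χ ⟨g * n * g⁻¹, hN.conj_mem n n.2 g⟩ = χ n)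
    (ϕ : H →* A) (hϕ : ∀ n : N, ϕ ⟨n, hNH n.2⟩ = χ n) (n : N) :
    transfer ϕ n = χ n ^ H.index := by
  rw [← hϕ]
  refine transfer_apply_eq_pow_index ϕ ⟨n, hNH n.2⟩ fun k g hk => ?_
  have hconj := hχ g⁻¹ (n ^ k)
  simp only [inv_inv, Subgroup.coe_pow] at hconj
  rw [hϕ, ← map_pow, ← hconj]
  exact hϕ ⟨_, _⟩

theorem exists_extension_of_restrict_eq_pow {N : Subgroup G} (χ : N →* A) (ψ : G →* A) {k : ℕ}
    (hk : (Nat.card N).Coprime k) (hψ : ∀ n : N, ψ n = χ n ^ k) :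
    ∃ ψ' : G →* A, ∀ n : N, ψ' n = χ n := by
  refine ⟨ψ ^ (Nat.card N).gcdB k, fun n => ?_⟩
  rw [zpow_apply, hψ, ← map_pow, ← map_zpow]
  exact congrArg χ ((powCoprime hk).left_inv n)

end MonoidHom

/-- Let `M` be a finite group, `N` a normal `p`-subgroup of `M`, and `P` a Sylow
`p`-subgroup of `M` (so `N ⊆ P`).  Suppose `χ` is a one-dimensional complex character of
`N` stabilised by `M` which extends to a one-dimensional character of `P`.  Then `χ`
extends to a one-dimensional character of `M`. -/
theorem stmt_7 (M : Type*) [Group M] [Finite M] (p : ℕ) [Fact p.Prime]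
    (N : Subgroup M) [hN : N.Normal] (hNp : IsPGroup p N)
    (P : Sylow p M) (hNP : N ≤ (P : Subgroup M))
    (χ : N →* ℂˣ)
    (hstab : ∀ (m : M) (n : N), χ ⟨m * n * m⁻¹, hN.conj_mem n n.2 m⟩ = χ n)
    (hext : ∃ χP : (P : Subgroup M) →* ℂˣ, ∀ n : N, χP ⟨n, hNP n.2⟩ = χ n) :
    ∃ χM : M →* ℂˣ, ∀ n : N, χM n = χ n := by
  obtain ⟨χP, hχP⟩ := hext
  obtain ⟨a, ha⟩ := hNp.exists_card_eq
  have hcop : (Nat.card N).Coprime (P : Subgroup M).index :=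
    ha ▸ ((Fact.out : p.Prime).coprime_pow_of_not_dvd P.not_dvd_index).symm
  exact MonoidHom.exists_extension_of_restrict_eq_pow χ (MonoidHom.transfer χP) hcop
    (MonoidHom.transfer_apply_eq_pow_index_of_extends hNP χ hstab χP hχP)
end

section
/- Let G₂ be a finite group, G¹ ⊴ G₂ an abelian normal subgroup, H ≤ G₂ a subgroup, and ψ : G¹ → ℂ× a homomorphism stabilised by H (i.e. ψ(h x h⁻¹) = ψ(x) for all h ∈ H, x ∈ G¹). If ψ is trivial on H ∩ G¹, then ψ extends to a homomorphism H·G¹ → ℂ× which is trivial on H. -/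
/-!
`H ⊔ G¹` is the image of the semidirect product `G¹ ⋊ H` under `(n, h) ↦ n * h`. Since `ψ` is
`H`-invariant, `(n, h) ↦ ψ n` is a homomorphism on `G¹ ⋊ H`. The multiplication map kills
exactly the pairs `(h⁻¹, h)` with `h ∈ H ∩ G¹`, where this homomorphism is trivial, so it
descends to `H ⊔ G¹`.
-/

namespace SemidirectProduct

variable {N G A : Type*} [Group N] [Group G] [Group A] {φ : G →* MulAut N}

def liftLeft (ψ : N →* A) (hψ : ∀ g n, ψ (φ g n) = ψ n) : N ⋊[φ] G →* A :=
  lift ψ 1 fun g => by ext n; simp [hψ]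

@[simp]
theorem liftLeft_apply (ψ : N →* A) (hψ : ∀ g n, ψ (φ g n) = ψ n) (x : N ⋊[φ] G) :
    liftLeft ψ hψ x = ψ x.left := by
  simp [liftLeft, lift]

end SemidirectProduct

namespace Subgroup

open SemidirectProduct

variable {G A : Type*} [Group G] [Group A] (N K : Subgroup G) [N.Normal]

abbrev conjNormalOn : K →* MulAut N := MulAut.conjNormal.comp K.subtype

def semidirectMul : N ⋊[N.conjNormalOn K] K →* G :=
  lift N.subtype K.subtype fun k => by ext n; simp

@[simp]
theorem semidirectMul_apply (x : N ⋊[N.conjNormalOn K] K) :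
    N.semidirectMul K x = x.left * x.right := rfl

theorem semidirectMul_mem_sup (x : N ⋊[N.conjNormalOn K] K) : N.semidirectMul K x ∈ K ⊔ N :=
  sup_comm N K ▸ mul_mem_sup x.left.2 x.right.2

theorem semidirectMul_codRestrict_surjective :
    Function.Surjective ((N.semidirectMul K).codRestrict (K ⊔ N) (N.semidirectMul_mem_sup K)) := by
  rintro ⟨g, hg⟩
  obtain ⟨n, hn, k, hk, rfl⟩ := mem_sup_of_normal_left.mp (sup_comm K N ▸ hg)
  exact ⟨⟨⟨n, hn⟩, ⟨k, hk⟩⟩, rfl⟩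

variable {N K}

theorem ker_semidirectMul_le_ker_liftLeft (ψ : N →* A)
    (hψ : ∀ (k : K) (n : N), ψ (N.conjNormalOn K k n) = ψ n)
    (htriv : ∀ n : N, (n : G) ∈ K → ψ n = 1) :
    (N.semidirectMul K).ker ≤ (liftLeft ψ hψ).ker := by
  intro x hx
  rw [MonoidHom.mem_ker, semidirectMul_apply, mul_eq_one_iff_eq_inv] at hx
  rw [MonoidHom.mem_ker, liftLeft_apply]
  exact htriv _ (hx ▸ inv_mem x.right.2)

theorem exists_extension_of_conj_invariant (ψ : N →* A)
    (hψ : ∀ k ∈ K, ∀ n : N, ψ (MulAut.conjNormal k n) = ψ n)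
    (htriv : ∀ n : N, (n : G) ∈ K → ψ n = 1) :
    ∃ ψ' : (K ⊔ N : Subgroup G) →* A,
      (∀ n : N, ψ' ⟨n, le_sup_right (a := K) n.2⟩ = ψ n) ∧
      ∀ k (hk : k ∈ K), ψ' ⟨k, le_sup_left (b := N) hk⟩ = 1 := by
  have hinv : ∀ (k : K) (n : N), ψ (N.conjNormalOn K k n) = ψ n := fun k => hψ k k.2
  let μ := (N.semidirectMul K).codRestrict (K ⊔ N) (N.semidirectMul_mem_sup K)
  have hker : μ.ker ≤ (liftLeft ψ hinv).ker :=
    (MonoidHom.ker_codRestrict _ _ _).le.trans (ker_semidirectMul_le_ker_liftLeft ψ hinv htriv)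
  obtain ⟨ψ', hψ'μ⟩ : ∃ ψ' : (K ⊔ N : Subgroup G) →* A, ∀ x, ψ' (μ x) = liftLeft ψ hinv x :=
    ⟨μ.liftOfSurjective (N.semidirectMul_codRestrict_surjective K) ⟨_, hker⟩,
      μ.liftOfRightInverse_comp_apply _ _ _⟩
  refine ⟨ψ', fun n => ?_, fun k hk => ?_⟩
  · convert hψ'μ (inl n) using 2
    · ext; simp [μ]
    · simp
  · convert hψ'μ (inr ⟨k, hk⟩) using 2
    · ext; simp [μ]
    · simp

end Subgroup

theorem stmt_12_general (G₂ : Type*) [Group G₂] (G1 H : Subgroup G₂) [hn : G1.Normal]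
    (ψ : G1 →* ℂˣ)
    (hstab : ∀ h ∈ H, ∀ x : G1, ψ ⟨h * x * h⁻¹, hn.conj_mem x x.2 h⟩ = ψ x)
    (htriv : ∀ x : G1, (x : G₂) ∈ H → ψ x = 1) :
    ∃ ψ' : (H ⊔ G1 : Subgroup G₂) →* ℂˣ,
      (∀ x : G1, ψ' ⟨x, (le_sup_right : G1 ≤ H ⊔ G1) x.2⟩ = ψ x) ∧
      (∀ (h : G₂) (hh : h ∈ H), ψ' ⟨h, (le_sup_left : H ≤ H ⊔ G1) hh⟩ = 1) :=
  Subgroup.exists_extension_of_conj_invariant ψ hstab htriv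

/-- Let `G₂` be a group, `G¹ ⊴ G₂` an abelian normal subgroup, `H ≤ G₂` a subgroup, and
`ψ : G¹ → ℂˣ` a homomorphism stabilised by `H`.  If `ψ` is trivial on `H ∩ G¹`, then `ψ`
extends to a homomorphism `H·G¹ → ℂˣ` which is trivial on `H`. -/
theorem stmt_12 (G₂ : Type*) [Group G₂] (G1 H : Subgroup G₂) [hn : G1.Normal]
    (hab : ∀ a b : G₂, a ∈ G1 → b ∈ G1 → a * b = b * a)
    (ψ : G1 →* ℂˣ)
    (hstab : ∀ h ∈ H, ∀ x : G1, ψ ⟨h * x * h⁻¹, hn.conj_mem x x.2 h⟩ = ψ x)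
    (htriv : ∀ x : G1, (x : G₂) ∈ H → ψ x = 1) :
    ∃ ψ' : (H ⊔ G1 : Subgroup G₂) →* ℂˣ,
      (∀ x : G1, ψ' ⟨x, (le_sup_right : G1 ≤ H ⊔ G1) x.2⟩ = ψ x) ∧
      (∀ (h : G₂) (hh : h ∈ H), ψ' ⟨h, (le_sup_left : H ≤ H ⊔ G1) hh⟩ = 1) :=
  stmt_12_general G₂ G1 H (hn := hn) ψ hstab htriv
end
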